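/- (Domain generalization error bound, Theorem 1 of the paper.) Let H be a nonempty set of hypotheses closed under pointwise XOR (so that HΔH ⊆ H). Let P_1, …, P_M be source probability measures on X with measurable labeling functions f_1, …, f_M : X → Bool, and let P_t be a target probability measure with measurable labeling f_t : X → Bool. Let π* ∈ Δ_M be a minimizer of π ↦ d_H(P_t, P_π) over Δ_M (which exists), set γ := d_H(P_t, P_{π*}), let P* := P_{π*} be the best approximator of P_t within the convex hull Λ := {P_π | π ∈ Δ_M}, let ρ := sup_{π′, π″ ∈ Δ_M} d_H(P_{π′}, P_{π″}) be the diameter of Λ, and let λ := inf_{h′ ∈ H} ( ε_{P_t}(h′; f_t) + Σ_{i=1}^M π*_i · ε_{P_i}(h′; f_i) ) be the ideal joint risk across the target domain and the best-approximator domain. Then for every h ∈ H: ε_{P_t}(h; f_t) ≤ Σ_{i=1}^M π*_i · ε_{P_i}(h; f_i) + (γ + ρ)/2 + λ. -/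
import Mathlib

open MeasureTheory

/-- The `H`-divergence `d_H(P, Q) = 2 · sup_{h ∈ H} |P {h = true} − Q {h = true}|`. -/
noncomputable def hDiv {X : Type*} [MeasurableSpace X]
    (H : Set (X → Bool)) (P Q : Measure X) : ℝ :=
  2 * sSup ((fun h => |(P {x | h x = true}).toReal - (Q {x | h x = true}).toReal|) '' H)

/-- The symmetric-difference class `HΔH = { x ↦ xor (h x) (h′ x) | h, h′ ∈ H }`. -/
def symmDiffClass {X : Type*} (H : Set (X → Bool)) : Set (X → Bool) :=
  {g | ∃ h ∈ H, ∃ h' ∈ H, g = fun x => xor (h x) (h' x)}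

/-- The mixture `P_π = Σ_i π_i • P_i` of the measures `P_i` with weights `π`. -/
noncomputable def mixture {X : Type*} [MeasurableSpace X] {M : ℕ}
    (P : Fin M → Measure X) (π : Fin M → ℝ) : Measure X :=
  ∑ i, ENNReal.ofReal (π i) • P i

lemma mixture_apply_toReal {X : Type*} [MeasurableSpace X] {M : ℕ}
    (P : Fin M → Measure X) (hP : ∀ i, IsProbabilityMeasure (P i))
    (π : Fin M → ℝ) (hπ : ∀ i, 0 ≤ π i) (A : Set X) :
    ((mixture P π) A).toReal = ∑ i, π i * (P i A).toReal := by
  rw [mixture, Measure.finset_sum_apply, ENNReal.toReal_sum]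
  · refine Finset.sum_congr rfl fun i _ => ?_
    rw [Measure.smul_apply, smul_eq_mul, ENNReal.toReal_mul, ENNReal.toReal_ofReal (hπ i)]
  · intro i _
    simp only [Measure.smul_apply, smul_eq_mul]
    exact ENNReal.mul_ne_top ENNReal.ofReal_ne_top (measure_ne_top _ _)

lemma mixture_isProb {X : Type*} [MeasurableSpace X] {M : ℕ}
    (P : Fin M → Measure X) (hP : ∀ i, IsProbabilityMeasure (P i))
    (π : Fin M → ℝ) (hπ : π ∈ stdSimplex ℝ (Fin M)) :
    IsProbabilityMeasure (mixture P π) := by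
  constructor
  have h1 : ((mixture P π) Set.univ).toReal = 1 := by
    rw [mixture_apply_toReal P hP π hπ.1]
    simp only [measure_univ, ENNReal.toReal_one, mul_one]
    exact hπ.2
  have hne : (mixture P π) Set.univ ≠ ⊤ := by
    rw [mixture, Measure.finset_sum_apply]
    exact ENNReal.sum_ne_top.2 fun i _ => by
      simp only [Measure.smul_apply, smul_eq_mul]
      exact ENNReal.mul_ne_top ENNReal.ofReal_ne_top (measure_ne_top _ _)
  rw [← ENNReal.ofReal_toReal hne, h1, ENNReal.ofReal_one]

lemma toReal_le_one {X : Type*} [MeasurableSpace X] (μ : Measure X)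
    [IsProbabilityMeasure μ] (A : Set X) : (μ A).toReal ≤ 1 := by
  have := prob_le_one (μ := μ) (s := A)
  simpa using ENNReal.toReal_mono ENNReal.one_ne_top this

lemma tri_toReal {X : Type*} [MeasurableSpace X] (μ : Measure X)
    [IsProbabilityMeasure μ] (a b c : X → Bool) :
    (μ {x | a x ≠ c x}).toReal ≤ (μ {x | a x ≠ b x}).toReal + (μ {x | b x ≠ c x}).toReal := by
  have hsub : {x | a x ≠ c x} ⊆ {x | a x ≠ b x} ∪ {x | b x ≠ c x} := by
    intro x hx
    by_contra hcon
    simp only [Set.mem_union, Set.mem_setOf_eq] at hcon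
    push_neg at hcon
    exact hx (hcon.1.trans hcon.2)
  have h1 : μ {x | a x ≠ c x} ≤ μ {x | a x ≠ b x} + μ {x | b x ≠ c x} :=
    (measure_mono hsub).trans (measure_union_le _ _)
  calc (μ {x | a x ≠ c x}).toReal
      ≤ (μ {x | a x ≠ b x} + μ {x | b x ≠ c x}).toReal :=
        ENNReal.toReal_mono (ENNReal.add_ne_top.2 ⟨measure_ne_top _ _, measure_ne_top _ _⟩) h1
    _ = (μ {x | a x ≠ b x}).toReal + (μ {x | b x ≠ c x}).toReal :=
        ENNReal.toReal_add (measure_ne_top _ _) (measure_ne_top _ _)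

/-- key: the divergence bounds the discrepancy on symmetric difference sets -/
lemma hdiv_bound {X : Type*} [MeasurableSpace X]
    (H : Set (X → Bool)) (hxor : symmDiffClass H ⊆ H)
    (P Q : Measure X) [IsProbabilityMeasure P] [IsProbabilityMeasure Q]
    (h h' : X → Bool) (hh : h ∈ H) (hh' : h' ∈ H) :
    (P {x | h x ≠ h' x}).toReal - (Q {x | h x ≠ h' x}).toReal ≤ hDiv H P Q / 2 := by
  set g : X → Bool := fun x => xor (h x) (h' x) with hg
  have hgH : g ∈ H := hxor ⟨h, hh, h', hh', rfl⟩
  have hset : {x | g x = true} = {x | h x ≠ h' x} := by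
    ext x
    simp only [Set.mem_setOf_eq, hg]
    cases h x <;> cases h' x <;> simp
  have hbdd : BddAbove ((fun h => |(P {x | h x = true}).toReal - (Q {x | h x = true}).toReal|) '' H) := by
    refine ⟨1, fun y hy => ?_⟩
    obtain ⟨h₀, _, rfl⟩ := hy
    have h1 := toReal_le_one P {x | h₀ x = true}
    have h2 := toReal_le_one Q {x | h₀ x = true}
    have h3 : (0:ℝ) ≤ (P {x | h₀ x = true}).toReal := ENNReal.toReal_nonneg
    have h4 : (0:ℝ) ≤ (Q {x | h₀ x = true}).toReal := ENNReal.toReal_nonneg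
    rw [abs_sub_le_iff]; constructor <;> linarith
  have hmem : |(P {x | g x = true}).toReal - (Q {x | g x = true}).toReal| ∈
      (fun h => |(P {x | h x = true}).toReal - (Q {x | h x = true}).toReal|) '' H :=
    ⟨g, hgH, rfl⟩
  have hle := le_csSup hbdd hmem
  rw [hset] at hle
  have : (P {x | h x ≠ h' x}).toReal - (Q {x | h x ≠ h' x}).toReal ≤
      |(P {x | h x ≠ h' x}).toReal - (Q {x | h x ≠ h' x}).toReal| := le_abs_self _
  rw [hDiv]
  linarith

/-- **Domain generalization error bound** (Theorem 1). With `π*` a minimizer of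
`π ↦ d_H(P_t, P_π)` over `Δ_M`, `γ = d_H(P_t, P_{π*})` its distance to the convex
hull, `ρ` the diameter of the convex hull, and `λ` the ideal joint risk across the
target domain and the best-approximator domain, every `h ∈ H` satisfies
`ε_{P_t}(h; f_t) ≤ Σ_i π*_i · ε_{P_i}(h; f_i) + (γ + ρ)/2 + λ`. -/
theorem domain_generalization_error_bound {X : Type*} [MeasurableSpace X] {M : ℕ}
    (H : Set (X → Bool)) (hne : H.Nonempty) (hmeas : ∀ h ∈ H, Measurable h)
    (hxor : symmDiffClass H ⊆ H)
    (P : Fin M → Measure X) (hP : ∀ i, IsProbabilityMeasure (P i))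
    (f : Fin M → X → Bool) (hf : ∀ i, Measurable (f i))
    (Pt : Measure X) [IsProbabilityMeasure Pt]
    (ft : X → Bool) (hft : Measurable ft)
    (πstar : Fin M → ℝ) (hπstar : πstar ∈ stdSimplex ℝ (Fin M))
    (hmin : ∀ π ∈ stdSimplex ℝ (Fin M),
      hDiv H Pt (mixture P πstar) ≤ hDiv H Pt (mixture P π))
    (γ : ℝ) (hγ : γ = hDiv H Pt (mixture P πstar))
    (ρ : ℝ)
    (hρ : ρ = sSup {d : ℝ | ∃ π' ∈ stdSimplex ℝ (Fin M), ∃ π'' ∈ stdSimplex ℝ (Fin M),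
        d = hDiv H (mixture P π') (mixture P π'')})
    (lam : ℝ)
    (hlam : lam = sInf ((fun h' => (Pt {x | h' x ≠ ft x}).toReal +
        ∑ i, πstar i * (P i {x | h' x ≠ f i x}).toReal) '' H))
    (h : X → Bool) (hh : h ∈ H) :
    (Pt {x | h x ≠ ft x}).toReal ≤
      (∑ i, πstar i * (P i {x | h x ≠ f i x}).toReal) + (γ + ρ) / 2 + lam := by
  haveI : IsProbabilityMeasure (mixture P πstar) := mixture_isProb P hP πstar hπstar
  -- ρ ≥ 0
  have hρ0 : 0 ≤ ρ := by
    rw [hρ]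
    apply Real.sSup_nonneg
    rintro d ⟨π', _, π'', _, rfl⟩
    rw [hDiv]
    have : 0 ≤ sSup ((fun h => |((mixture P π') {x | h x = true}).toReal -
        ((mixture P π'') {x | h x = true}).toReal|) '' H) :=
      Real.sSup_nonneg (by rintro y ⟨h₀, _, rfl⟩; exact abs_nonneg _)
    linarith
  -- main step: for every h' ∈ H the bound without the inf holds
  have key : ∀ h' ∈ H, (Pt {x | h x ≠ ft x}).toReal ≤
      (∑ i, πstar i * (P i {x | h x ≠ f i x}).toReal) + (γ + ρ) / 2 +
      ((Pt {x | h' x ≠ ft x}).toReal + ∑ i, πstar i * (P i {x | h' x ≠ f i x}).toReal) := by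
    intro h' hh'
    have t1 : (Pt {x | h x ≠ ft x}).toReal ≤
        (Pt {x | h x ≠ h' x}).toReal + (Pt {x | h' x ≠ ft x}).toReal :=
      tri_toReal Pt h h' ft
    have t2 : (Pt {x | h x ≠ h' x}).toReal ≤
        ((mixture P πstar) {x | h x ≠ h' x}).toReal + γ / 2 := by
      have := hdiv_bound H hxor Pt (mixture P πstar) h h' hh hh'
      rw [← hγ] at this
      linarith
    have t3 : ((mixture P πstar) {x | h x ≠ h' x}).toReal ≤
        (∑ i, πstar i * (P i {x | h x ≠ f i x}).toReal) +
        (∑ i, πstar i * (P i {x | h' x ≠ f i x}).toReal) := by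
      rw [mixture_apply_toReal P hP πstar hπstar.1, ← Finset.sum_add_distrib]
      refine Finset.sum_le_sum fun i _ => ?_
      rw [← mul_add]
      refine mul_le_mul_of_nonneg_left ?_ (hπstar.1 i)
      haveI := hP i
      calc (P i {x | h x ≠ h' x}).toReal
          ≤ (P i {x | h x ≠ f i x}).toReal + (P i {x | f i x ≠ h' x}).toReal :=
            tri_toReal (P i) h (f i) h'
        _ = (P i {x | h x ≠ f i x}).toReal + (P i {x | h' x ≠ f i x}).toReal := by
            have hs : {x | f i x ≠ h' x} = {x | h' x ≠ f i x} := by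
              ext x; exact ne_comm
            rw [hs]
    linarith
  -- conclude via le_csInf
  have hlamle : (Pt {x | h x ≠ ft x}).toReal -
      (∑ i, πstar i * (P i {x | h x ≠ f i x}).toReal) - (γ + ρ) / 2 ≤ lam := by
    rw [hlam]
    refine le_csInf (hne.image _) ?_
    rintro b ⟨h', hh', rfl⟩
    have := key h' hh'
    simp only
    linarith
  linarith
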